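/- arXiv:2307.03627 — 5 statements merged into one kernel-verified Lean document; each statement's English description precedes it below -/
import Mathlib

section
/- Let F be a free group freely generated by a set X. Then the set X ∪ X⁻¹ (the generators together with their inverses) is a distinct difference configuration: for any ordered pairs (g,h) and (g',h') of distinct elements of X ∪ X⁻¹, if g⁻¹h = g'⁻¹h' then g = g' and h = h'. -/
/-- A subset `D` of a group is a distinct difference configuration: the map
`(g,h) ↦ g⁻¹ * h` is injective on ordered pairs of distinct elements of `D`. -/
def IsDDC {G : Type*} [Group G] (D : Set G) : Prop :=
  ∀ g ∈ D, ∀ h ∈ D, ∀ g' ∈ D, ∀ h' ∈ D,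
    g ≠ h → g' ≠ h' → g⁻¹ * h = g'⁻¹ * h' → g = g' ∧ h = h'

private lemma mem_single {α : Type*} (g : FreeGroup α)
    (hg : g ∈ (Set.range (FreeGroup.of : α → FreeGroup α)) ∪
      (Set.range (FreeGroup.of : α → FreeGroup α))⁻¹) :
    ∃ a b, g = FreeGroup.mk [(a, b)] := by
  rcases hg with ⟨a, rfl⟩ | hg
  · exact ⟨a, true, rfl⟩
  · rcases hg with ⟨a, ha⟩
    refine ⟨a, false, ?_⟩
    have : g = (FreeGroup.of a)⁻¹ := by
      have := congrArg Inv.inv ha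
      simpa using this.symm
    rw [this]
    show (FreeGroup.mk [(a, true)])⁻¹ = _
    rw [FreeGroup.inv_mk]
    rfl

private lemma toWord_pair {α : Type*} [DecidableEq α] (a c : α) (s d : Bool)
    (h : ¬(a = c ∧ s = (!d))) :
    (FreeGroup.mk [(a, s), (c, d)]).toWord = [(a, s), (c, d)] := by
  rw [FreeGroup.toWord_mk]
  simp only [FreeGroup.reduce.cons, FreeGroup.reduce_nil]
  simp [h]

theorem stmt0 (α : Type*) :
    IsDDC ((Set.range (FreeGroup.of : α → FreeGroup α)) ∪
      (Set.range (FreeGroup.of : α → FreeGroup α))⁻¹) := by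
  classical
  intro g hg h hh g' hg' h' hh' hne hne' heq
  obtain ⟨a, b, rfl⟩ := mem_single g hg
  obtain ⟨c, d, rfl⟩ := mem_single h hh
  obtain ⟨a', b', rfl⟩ := mem_single g' hg'
  obtain ⟨c', d', rfl⟩ := mem_single h' hh'
  have hred : ¬(a = c ∧ (!b) = (!d)) := by
    rintro ⟨rfl, hb⟩
    exact hne (by simp at hb; rw [hb])
  have hred' : ¬(a' = c' ∧ (!b') = (!d')) := by
    rintro ⟨rfl, hb⟩
    exact hne' (by simp at hb; rw [hb])
  rw [FreeGroup.inv_mk, FreeGroup.inv_mk] at heq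
  have hmul : FreeGroup.mk [(a, !b), (c, d)] = FreeGroup.mk [(a', !b'), (c', d')] := by
    have e1 : FreeGroup.invRev [(a, b)] = [(a, !b)] := rfl
    have e2 : FreeGroup.invRev [(a', b')] = [(a', !b')] := rfl
    rw [e1, e2] at heq
    rw [FreeGroup.mul_mk] at heq
    exact heq
  have hw := congrArg FreeGroup.toWord hmul
  rw [toWord_pair a c (!b) d hred, toWord_pair a' c' (!b') d' hred'] at hw
  simp only [List.cons.injEq, Prod.mk.injEq, and_true, List.nil_eq] at hw
  obtain ⟨⟨rfl, hb⟩, ⟨rfl, rfl⟩⟩ := hw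
  have : b = b' := by simpa using hb
  subst this
  exact ⟨rfl, rfl⟩
end

section
/- Let F be a free group with free generating set X and let d be a positive integer divisible by 4. Let R be the set of reduced words of length d/4 over X ∪ X⁻¹, and for w ∈ R let rev(w) denote the reversed word. Then D = { w·rev(w) : w ∈ R } is a distinct difference configuration in F of diameter at most d. -/
/-- Reversal of a free group element: the free group element represented by the
reverse of the reduced word of `w`. -/
def FreeGroup.rev {α : Type*} [DecidableEq α] (w : FreeGroup α) : FreeGroup α :=
  FreeGroup.mk w.toWord.reverse

theorem List.exists_eq_append_cons_of_length_eq_of_ne {β : Type*} :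
    ∀ {a b : List β}, a.length = b.length → a ≠ b →
      ∃ p x y s t, a = p ++ x :: s ∧ b = p ++ y :: t ∧ x ≠ y
  | [], [], _, hne => absurd rfl hne
  | a :: as, b :: bs, hlen, hne => by
    by_cases hab : a = b
    · subst hab
      obtain ⟨p, x, y, s, t, rfl, rfl, hxy⟩ :=
        exists_eq_append_cons_of_length_eq_of_ne (by simpa using hlen)
          (fun h => hne (by rw [h]))
      exact ⟨a :: p, x, y, s, t, rfl, rfl, hxy⟩
    · exact ⟨[], a, b, as, bs, rfl, rfl, hab⟩

namespace FreeGroup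

section IsReduced

variable {α : Type*} {L : List (α × Bool)}

theorem IsReduced.reverse (h : IsReduced L) : IsReduced L.reverse :=
  List.isChain_reverse.mpr <| h.imp fun _ _ hab hba => (hab hba.symm).symm

theorem IsReduced.invRev (h : IsReduced L) : IsReduced (invRev L) := by
  rw [IsReduced, FreeGroup.invRev, List.isChain_reverse, List.isChain_map]
  exact h.imp fun _ _ hab hba => congrArg Bool.not (hab hba.symm).symm

theorem IsReduced.append_reverse (h : IsReduced L) : IsReduced (L ++ L.reverse) := by
  refine List.isChain_append.mpr ⟨h, h.reverse, fun a ha b hb => ?_⟩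
  rw [List.head?_reverse, ha, Option.mem_some_iff] at hb
  exact fun _ => hb ▸ rfl

theorem IsReduced.append_reverse_of_suffix {u : List (α × Bool)} (h : IsReduced L)
    (hu : u <:+ L) : IsReduced (u ++ L.reverse) := by
  obtain ⟨q, rfl⟩ := hu
  exact h.append_reverse.infix ⟨q, [], by simp⟩

theorem IsReduced.invRev_cons_append_cons {x y : α × Bool} {s t : List (α × Bool)}
    (hs : IsReduced (x :: s)) (ht : IsReduced (y :: t)) (hxy : x ≠ y) :
    IsReduced (FreeGroup.invRev (x :: s) ++ y :: t) := by
  refine List.isChain_append.mpr ⟨hs.invRev, ht, fun a ha b hb => ?_⟩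
  simp only [FreeGroup.invRev, List.map_cons, List.reverse_cons, List.getLast?_append,
    List.getLast?_singleton, Option.mem_def, Option.some_or, Option.some.injEq] at ha
  rw [List.head?_cons, Option.mem_some_iff] at hb
  subst ha hb
  intro h1
  by_contra h2
  exact hxy (Prod.ext h1 (by simpa using h2))

end IsReduced

variable {α : Type*} [DecidableEq α]

theorem toWord_mul_mul_of_isReduced {a b c : FreeGroup α}
    (hab : IsReduced (a.toWord ++ b.toWord)) (hbc : IsReduced (b.toWord ++ c.toWord))
    (hb : b ≠ 1) : (a * b * c).toWord = a.toWord ++ b.toWord ++ c.toWord := by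
  have hab' : (a * b).toWord = a.toWord ++ b.toWord := by rw [toWord_mul, hab.reduce_eq]
  rw [toWord_mul, hab', (hab.append_overlap hbc (by rwa [Ne, toWord_eq_nil_iff])).reduce_eq]

theorem toWord_rev (w : FreeGroup α) : w.rev.toWord = w.toWord.reverse := by
  rw [rev, toWord_mk, isReduced_toWord.reverse.reduce_eq]

theorem norm_rev (w : FreeGroup α) : w.rev.norm = w.norm := by
  rw [norm, norm, toWord_rev, List.length_reverse]

theorem rev_injective : Function.Injective (rev (α := α)) := fun w v h =>
  toWord_injective <| List.reverse_injective <| by rw [← toWord_rev, h, toWord_rev]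

theorem norm_mul_rev_le (w : FreeGroup α) : (w * w.rev).norm ≤ 2 * w.norm :=
  (norm_mul_le _ _).trans_eq (by rw [norm_rev, two_mul])

theorem toWord_inv_mul_rev {w v : FreeGroup α} (hwv : w ≠ v) (hnorm : w.norm = v.norm) :
    ((w * w.rev)⁻¹ * (v * v.rev)).toWord =
      w.rev⁻¹.toWord ++ (w⁻¹ * v).toWord ++ v.rev.toWord := by
  obtain ⟨p, x, y, s, t, hw, hv, hxy⟩ :=
    List.exists_eq_append_cons_of_length_eq_of_ne hnorm (mt (toWord_injective ·) hwv)
  have hxs : IsReduced (x :: s) := (isReduced_toWord (x := w)).infix ⟨p, [], by simp [hw]⟩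
  have hyt : IsReduced (y :: t) := (isReduced_toWord (x := v)).infix ⟨p, [], by simp [hv]⟩
  have hmid := hxs.invRev_cons_append_cons hyt hxy
  have hmid_toWord : (w⁻¹ * v).toWord = FreeGroup.invRev (x :: s) ++ y :: t := by
    have : w⁻¹ * v = (mk (x :: s))⁻¹ * mk (y :: t) := by
      rw [← mk_toWord (x := w), ← mk_toWord (x := v), hw, hv, ← mul_mk, ← mul_mk]
      group
    rw [this, inv_mk, mul_mk, toWord_mk, hmid.reduce_eq]
  rw [show (w * w.rev)⁻¹ * (v * v.rev) = w.rev⁻¹ * (w⁻¹ * v) * v.rev by group]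
  refine toWord_mul_mul_of_isReduced ?_ ?_ (by rwa [Ne, inv_mul_eq_one])
  · rw [toWord_inv, toWord_rev, hmid_toWord, ← List.append_assoc]
    refine IsReduced.append_overlap ?_ hmid (by simp [FreeGroup.invRev])
    rw [← invRev_append]
    exact (isReduced_toWord.append_reverse_of_suffix ⟨p, hw.symm⟩).invRev
  · rw [toWord_rev, hmid_toWord]
    exact hmid.append_overlap (isReduced_toWord.append_reverse_of_suffix ⟨p, hv.symm⟩)
      (List.cons_ne_nil _ _)

theorem eq_and_eq_of_inv_mul_rev_eq {n : ℕ} {w v w' v' : FreeGroup α}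
    (hw : w.norm = n) (hv : v.norm = n) (hw' : w'.norm = n) (hv' : v'.norm = n)
    (hwv : w ≠ v) (hwv' : w' ≠ v')
    (h : (w * w.rev)⁻¹ * (v * v.rev) = (w' * w'.rev)⁻¹ * (v' * v'.rev)) :
    w = w' ∧ v = v' := by
  have hword := (toWord_inv_mul_rev hwv (hw.trans hv.symm)).symm.trans <|
    congrArg toWord h |>.trans (toWord_inv_mul_rev hwv' (hw'.trans hv'.symm))
  have hprefix : w.rev⁻¹.toWord = w'.rev⁻¹.toWord := by
    rw [List.append_assoc, List.append_assoc] at hword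
    refine (List.append_inj hword ?_).1
    change w.rev⁻¹.norm = w'.rev⁻¹.norm
    rw [norm_inv_eq, norm_inv_eq, norm_rev, norm_rev, hw, hw']
  have hsuffix : v.rev.toWord = v'.rev.toWord := by
    refine List.append_inj_right' hword ?_
    change v.rev.norm = v'.rev.norm
    rw [norm_rev, norm_rev, hv, hv']
  exact ⟨rev_injective (inv_injective (toWord_injective hprefix)),
    rev_injective (toWord_injective hsuffix)⟩

end FreeGroup

theorem stmt6_general (α : Type*) [DecidableEq α] (d : ℕ) :
    IsDDC {g : FreeGroup α | ∃ w : FreeGroup α, w.norm = d / 4 ∧ g = w * w.rev} ∧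
    ∀ g ∈ {g : FreeGroup α | ∃ w : FreeGroup α, w.norm = d / 4 ∧ g = w * w.rev},
      ∀ h ∈ {g : FreeGroup α | ∃ w : FreeGroup α, w.norm = d / 4 ∧ g = w * w.rev},
        (g⁻¹ * h).norm ≤ d := by
  refine ⟨?_, ?_⟩
  · rintro _ ⟨w, hw, rfl⟩ _ ⟨v, hv, rfl⟩ _ ⟨w', hw', rfl⟩ _ ⟨v', hv', rfl⟩ hne hne' h
    obtain ⟨rfl, rfl⟩ := FreeGroup.eq_and_eq_of_inv_mul_rev_eq hw hv hw' hv'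
      (fun hwv => hne (hwv ▸ rfl)) (fun hwv => hne' (hwv ▸ rfl)) h
    exact ⟨rfl, rfl⟩
  · rintro _ ⟨w, hw, rfl⟩ _ ⟨v, hv, rfl⟩
    calc ((w * w.rev)⁻¹ * (v * v.rev)).norm
        ≤ (w * w.rev).norm + (v * v.rev).norm := by
          simpa only [FreeGroup.norm_inv_eq] using
            FreeGroup.norm_mul_le (w * w.rev)⁻¹ (v * v.rev)
      _ ≤ 2 * w.norm + 2 * v.norm := add_le_add w.norm_mul_rev_le v.norm_mul_rev_le
      _ ≤ d := by omega

theorem stmt6 (α : Type*) [DecidableEq α] (d : ℕ) (hd : 0 < d) (hd4 : 4 ∣ d) :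
    IsDDC {g : FreeGroup α | ∃ w : FreeGroup α, w.norm = d / 4 ∧ g = w * w.rev} ∧
    ∀ g ∈ {g : FreeGroup α | ∃ w : FreeGroup α, w.norm = d / 4 ∧ g = w * w.rev},
      ∀ h ∈ {g : FreeGroup α | ∃ w : FreeGroup α, w.norm = d / 4 ∧ g = w * w.rev},
        (g⁻¹ * h).norm ≤ d :=
  stmt6_general α d
end

section
/- Let F be a free group with free generating set X, let r be a positive integer, and let D be a subset of the sphere S_r(e) of radius r about the identity. For x in the ball B_{r−1}(e), define D_x = { x' ∈ F : x·x' ∈ D and the product x·x' is reduced (i.e., |x·x'| = |x| + |x'|) }. If D is a distinct difference configuration, then |D_x ∩ D_y| ≤ 1 for all distinct x, y ∈ B_{r−1}(e). -/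
theorem stmt8 (α : Type*) [DecidableEq α] (r : ℕ) (hr : 0 < r)
    (D : Set (FreeGroup α)) (hD : D ⊆ {g : FreeGroup α | g.norm = r})
    (Dx : FreeGroup α → Set (FreeGroup α))
    (hDx : ∀ x, Dx x = {x' : FreeGroup α | x * x' ∈ D ∧
      (x * x').norm = x.norm + x'.norm})
    (hDDC : IsDDC D) :
    ∀ x y : FreeGroup α, x.norm ≤ r - 1 → y.norm ≤ r - 1 → x ≠ y →
      (Dx x ∩ Dx y).ncard ≤ 1 := by
  intro x y _ _ hxy
  have hsub : (Dx x ∩ Dx y).Subsingleton := by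
    intro z hz w hw
    by_contra hzw
    obtain ⟨hz1, hz2⟩ := hz
    obtain ⟨hw1, hw2⟩ := hw
    rw [hDx] at hz1 hw1
    rw [hDx] at hz2 hw2
    obtain ⟨hxz, -⟩ := hz1
    obtain ⟨hyz, -⟩ := hz2
    obtain ⟨hxw, -⟩ := hw1
    obtain ⟨hyw, -⟩ := hw2
    have h1 : x * z ≠ x * w := fun h => hzw (mul_left_cancel h)
    have h2 : y * z ≠ y * w := fun h => hzw (mul_left_cancel h)
    have heq : (x * z)⁻¹ * (x * w) = (y * z)⁻¹ * (y * w) := by group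
    obtain ⟨h3, _⟩ := hDDC _ hxz _ hxw _ hyz _ hyw h1 h2 heq
    exact hxy (mul_right_cancel h3)
  rw [Set.ncard_le_one_iff hsub.finite]
  exact fun ha hb => hsub ha hb
end

section
/- Let F be a free group of rank n ≥ 2 with free generating set X, let j be a positive integer, and let D be a distinct difference configuration contained in the sphere S_j(e). Then |D| ≤ 2n(2n−1)^{2j/3} + 2n²(2n−1)^{2j/3−2}. -/
/-!
Write each `g ∈ D` as `g = p * s`, where `p` is the prefix of length `t = ⌊j/3⌋` of the
reduced word of `g`. For distinct prefixes `p ≠ p'`, two distinct common suffixes `s ≠ s'`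
would give `(p s)⁻¹ (p s') = s⁻¹ s' = (p' s)⁻¹ (p' s')`, contradicting the DDC property.
So the suffix sets of distinct prefixes meet in at most one element, and inclusion–exclusion
gives `|D| ≤ |S_{j-t}| + C(|S_t|, 2)`. Counting reduced words, `|S_{k+1}| ≤ 2n (2n-1)^k`,
and the choice of `t` makes both terms at most the stated ones.
-/

open Finset Pointwise

theorem IsDDC.subsingleton_smul_inter {G : Type*} [Group G] {D : Set G} (hD : IsDDC D)
    {a b : G} (hab : a ≠ b) : (a • D ∩ b • D).Subsingleton := by
  rintro x ⟨hxa, hxb⟩ y ⟨hya, hyb⟩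
  rw [Set.mem_smul_set_iff_inv_smul_mem, smul_eq_mul] at hxa hxb hya hyb
  by_contra hxy
  have hne : ∀ c : G, c * x ≠ c * y := fun c => (mul_right_injective c).ne hxy
  obtain ⟨hx, -⟩ := hD _ hxa _ hya _ hxb _ hyb (hne _) (hne _) (by group)
  exact hab (inv_injective (mul_right_cancel hx))

theorem Finset.sum_card_le_card_biUnion_add_choose_two {ι β : Type*} [DecidableEq ι]
    [DecidableEq β] (P : Finset ι) (A : ι → Finset β)
    (h : (P : Set ι).Pairwise fun x y => #(A x ∩ A y) ≤ 1) :
    ∑ x ∈ P, #(A x) ≤ #(P.biUnion A) + (#P).choose 2 := by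
  induction P using Finset.induction_on with
  | empty => simp
  | @insert a P ha ih =>
    rw [coe_insert, Set.pairwise_insert] at h
    have hoverlap : #(A a ∩ P.biUnion A) ≤ #P := by
      rw [inter_biUnion]
      refine card_biUnion_le.trans ?_
      simpa using sum_le_card_nsmul P _ 1 fun x hx =>
        (h.2 x hx (ne_of_mem_of_not_mem hx ha).symm).1
    have := card_union_add_card_inter (A a) (P.biUnion A)
    have hchoose : (#P + 1).choose 2 = (#P).choose 2 + #P := by
      simpa [add_comm] using Nat.choose_succ_succ' #P 1
    rw [sum_insert ha, biUnion_insert, card_insert_of_notMem ha]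
    have := ih h.1
    omega

theorem IsDDC.card_le_card_add_choose_two {G : Type*} [Group G] [DecidableEq G] {D : Finset G}
    (hD : IsDDC (D : Set G)) (pre suf : G → G) {P S : Finset G}
    (hmul : ∀ g ∈ D, pre g * suf g = g) (hpre : ∀ g ∈ D, pre g ∈ P)
    (hsuf : ∀ g ∈ D, suf g ∈ S) :
    #D ≤ #S + (#P).choose 2 := by
  set A : G → Finset G := fun p => {g ∈ D | pre g = p}.image suf
  have hfiber (p : G) : #{g ∈ D | pre g = p} = #(A p) := by
    refine (card_image_of_injOn fun g hg g' hg' h => ?_).symm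
    rw [mem_coe, mem_filter] at hg hg'
    rw [← hmul g hg.1, ← hmul g' hg'.1, hg.2, hg'.2, h]
  have hA (p : G) : (A p : Set G) ⊆ p⁻¹ • (D : Set G) := by
    simp only [A, coe_image, coe_filter, Set.image_subset_iff]
    rintro g ⟨hg, rfl⟩
    simpa [Set.mem_smul_set_iff_inv_smul_mem, hmul g hg]
  have hoverlap : ((D.image pre : Finset G) : Set G).Pairwise fun p p' => #(A p ∩ A p') ≤ 1 :=
    fun p _ p' _ hp => card_le_one_iff_subsingleton_coe.2 <| Set.subsingleton_coe _ |>.2 <| by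
      rw [coe_inter]
      exact (hD.subsingleton_smul_inter (inv_injective.ne hp)).anti
        (Set.inter_subset_inter (hA p) (hA p'))
  calc #D = ∑ p ∈ D.image pre, #(A p) := by
        rw [card_eq_sum_card_image pre D]; exact sum_congr rfl fun p _ => hfiber p
    _ ≤ #((D.image pre).biUnion A) + (#(D.image pre)).choose 2 :=
        sum_card_le_card_biUnion_add_choose_two _ _ hoverlap
    _ ≤ #S + (#P).choose 2 := by
        gcongr
        · simp only [A, biUnion_subset, image_subset_iff, mem_filter]
          exact fun _ _ g hg => hsuf g hg.1
        · simpa only [image_subset_iff] using hpre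

theorem Fintype.one_le_two_mul_card_sub_one (α : Type*) [Fintype α] [Nonempty α] :
    (1 : ℝ) ≤ 2 * Fintype.card α - 1 := by
  have : (1 : ℝ) ≤ Fintype.card α := by exact_mod_cast Fintype.card_pos
  linarith

namespace FreeGroup

variable {α : Type*} [DecidableEq α]

instance : DecidablePred (@IsReduced α) := fun L => inferInstanceAs (Decidable (L.IsChain _))

theorem norm_mk_of_isReduced {L : List (α × Bool)} (hL : IsReduced L) :
    (mk L).norm = L.length := by
  rw [norm, toWord_mk, hL.reduce_eq]

theorem mk_take_mul_mk_drop (g : FreeGroup α) (t : ℕ) :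
    mk (g.toWord.take t) * mk (g.toWord.drop t) = g := by
  rw [mul_mk, List.take_append_drop, mk_toWord]

variable (α) [Fintype α]

def reducedWords (k : ℕ) : Finset (List (α × Bool)) :=
  {L ∈ (univ : Finset (List.Vector (α × Bool) k)).image List.Vector.toList | IsReduced L}

variable {α}

theorem mem_reducedWords {k : ℕ} {L : List (α × Bool)} :
    L ∈ reducedWords α k ↔ L.length = k ∧ IsReduced L := by
  rw [reducedWords, mem_filter, mem_image]
  exact and_congr_left'
    ⟨fun ⟨v, _, hv⟩ => hv ▸ v.toList_length, fun h => ⟨⟨L, h⟩, mem_univ _, rfl⟩⟩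

theorem reducedWords_zero : reducedWords α 0 = {[]} := by
  ext L
  simp +contextual [mem_reducedWords, List.length_eq_zero_iff]

theorem reducedWords_succ_subset (k : ℕ) :
    reducedWords α (k + 1) ⊆
      (reducedWords α k).biUnion fun L =>
        (univ.filter fun a => IsReduced (a :: L)).image (· :: L) := by
  rintro (_ | ⟨a, L⟩) hL
  · simp [mem_reducedWords] at hL
  rw [mem_reducedWords] at hL
  simp only [mem_biUnion, mem_image, mem_filter, mem_univ, true_and, mem_reducedWords]
  exact ⟨L, ⟨by simpa using hL.1, hL.2.infix (List.suffix_cons a L).isInfix⟩, a, hL.2, rfl⟩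

theorem card_reducedWords_succ_le_sum (k : ℕ) :
    #(reducedWords α (k + 1)) ≤
      ∑ L ∈ reducedWords α k, #(univ.filter fun a => IsReduced (a :: L)) :=
  (card_le_card (reducedWords_succ_subset k)).trans <|
    card_biUnion_le.trans <| sum_le_sum fun _ _ => card_image_le

theorem card_filter_isReduced_cons_cons_le (b : α × Bool) (L : List (α × Bool)) :
    #(univ.filter fun a => IsReduced (a :: b :: L)) ≤ 2 * Fintype.card α - 1 := by
  have hsub : univ.filter (fun a => IsReduced (a :: b :: L)) ⊆ univ.erase (b.1, !b.2) := by
    intro a ha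
    refine mem_erase.2 ⟨?_, mem_univ a⟩
    rintro rfl
    simp at ha
  simpa [card_erase_of_mem, mul_comm] using card_le_card hsub

theorem card_reducedWords_succ_le (k : ℕ) :
    #(reducedWords α (k + 1)) ≤ 2 * Fintype.card α * (2 * Fintype.card α - 1) ^ k := by
  induction k with
  | zero =>
    refine (card_reducedWords_succ_le_sum 0).trans ?_
    simp [reducedWords_zero, mul_comm]
  | succ k ih =>
    refine (card_reducedWords_succ_le_sum (k + 1)).trans ?_
    calc ∑ L ∈ reducedWords α (k + 1), #(univ.filter fun a => IsReduced (a :: L))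
        ≤ #(reducedWords α (k + 1)) * (2 * Fintype.card α - 1) := by
          refine sum_le_card_nsmul _ _ _ fun L hL => ?_
          obtain ⟨b, L, rfl⟩ := List.exists_cons_of_length_eq_add_one (mem_reducedWords.1 hL).1
          exact card_filter_isReduced_cons_cons_le b L
      _ ≤ _ := by rw [pow_succ, ← mul_assoc]; exact Nat.mul_le_mul_right _ ih

variable (α) in
def sphere (k : ℕ) : Finset (FreeGroup α) := (reducedWords α k).image mk

theorem mem_sphere {k : ℕ} {g : FreeGroup α} : g ∈ sphere α k ↔ g.norm = k := by
  refine ⟨?_, fun h =>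
    mem_image.2 ⟨g.toWord, mem_reducedWords.2 ⟨h, isReduced_toWord⟩, mk_toWord⟩⟩
  intro hg
  obtain ⟨L, hL, rfl⟩ := mem_image.1 hg
  rw [mem_reducedWords] at hL
  rw [norm_mk_of_isReduced hL.2, hL.1]

theorem sphere_zero : sphere α 0 = {1} := by
  simp [sphere, reducedWords_zero, one_eq_mk]

theorem card_sphere_succ_le (k : ℕ) :
    #(sphere α (k + 1)) ≤ 2 * Fintype.card α * (2 * Fintype.card α - 1) ^ k :=
  card_image_le.trans (card_reducedWords_succ_le k)

theorem mk_take_mem_sphere {g : FreeGroup α} {t : ℕ} (ht : t ≤ g.norm) :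
    mk (g.toWord.take t) ∈ sphere α t := by
  rw [mem_sphere, norm_mk_of_isReduced (isReduced_toWord.infix (List.take_prefix _ _).isInfix),
    List.length_take, ← norm, min_eq_left ht]

theorem mk_drop_mem_sphere (g : FreeGroup α) (t : ℕ) :
    mk (g.toWord.drop t) ∈ sphere α (g.norm - t) := by
  rw [mem_sphere, norm_mk_of_isReduced (isReduced_toWord.infix (List.drop_suffix _ _).isInfix),
    List.length_drop, norm]

section Real

variable [Nonempty α]

theorem cast_card_sphere_succ_le (k : ℕ) :
    (#(sphere α (k + 1)) : ℝ) ≤ 2 * Fintype.card α * (2 * Fintype.card α - 1 : ℝ) ^ k := by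
  have h1 : 1 ≤ 2 * Fintype.card α := by have := Fintype.card_pos (α := α); omega
  calc (#(sphere α (k + 1)) : ℝ)
      ≤ ((2 * Fintype.card α * (2 * Fintype.card α - 1) ^ k : ℕ) : ℝ) := by
        exact_mod_cast card_sphere_succ_le k
    _ = _ := by push_cast [Nat.cast_sub h1]; ring

theorem card_sphere_le_rpow {k : ℕ} {e : ℝ} (hk : 0 < k) (he : (k : ℝ) ≤ e + 1) :
    (#(sphere α k) : ℝ) ≤ 2 * Fintype.card α * (2 * Fintype.card α - 1 : ℝ) ^ e := by
  obtain ⟨k, rfl⟩ : ∃ m, k = m + 1 := ⟨k - 1, by omega⟩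
  refine (cast_card_sphere_succ_le k).trans (mul_le_mul_of_nonneg_left ?_ (by positivity))
  rw [← Real.rpow_natCast]
  exact Real.rpow_le_rpow_of_exponent_le (Fintype.one_le_two_mul_card_sub_one α)
    (by push_cast at he; linarith)

theorem choose_two_card_sphere_le_rpow {k : ℕ} {e : ℝ} (he : 2 * (k : ℝ) ≤ e + 2) :
    ((#(sphere α k)).choose 2 : ℝ) ≤
      2 * Fintype.card α ^ 2 * (2 * Fintype.card α - 1 : ℝ) ^ e := by
  have hc := Fintype.one_le_two_mul_card_sub_one α
  rcases k with _ | k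
  · rw [sphere_zero, card_singleton, Nat.choose_eq_zero_of_lt one_lt_two, Nat.cast_zero]
    positivity
  set m : ℝ := (#(sphere α (k + 1)) : ℝ)
  have hm0 : 0 ≤ m := Nat.cast_nonneg _
  have hm : m ≤ 2 * Fintype.card α * (2 * Fintype.card α - 1 : ℝ) ^ k :=
    cast_card_sphere_succ_le k
  have hpow :
      (2 * Fintype.card α - 1 : ℝ) ^ (2 * k) ≤ (2 * Fintype.card α - 1 : ℝ) ^ e := by
    rw [← Real.rpow_natCast]
    exact Real.rpow_le_rpow_of_exponent_le hc (by push_cast at he ⊢; linarith)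
  calc ((#(sphere α (k + 1))).choose 2 : ℝ) = m * (m - 1) / 2 := Nat.cast_choose_two ℝ _
    _ ≤ m ^ 2 / 2 := by linarith
    _ ≤ (2 * Fintype.card α * (2 * Fintype.card α - 1 : ℝ) ^ k) ^ 2 / 2 := by gcongr
    _ = 2 * Fintype.card α ^ 2 * (2 * Fintype.card α - 1 : ℝ) ^ (2 * k) := by ring
    _ ≤ _ := by gcongr

end Real

end FreeGroup

open FreeGroup

theorem stmt13 (α : Type*) [Fintype α] [DecidableEq α] (n : ℕ) (hn : 2 ≤ n)
    (hcard : Fintype.card α = n) (j : ℕ) (hj : 0 < j)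
    (D : Set (FreeGroup α)) (hD : D ⊆ {g : FreeGroup α | g.norm = j})
    (hDDC : IsDDC D) :
    (D.ncard : ℝ) ≤ 2 * n * (2 * n - 1 : ℝ) ^ ((2 * (j : ℝ)) / 3) +
      2 * n ^ 2 * (2 * n - 1 : ℝ) ^ ((2 * (j : ℝ)) / 3 - 2) := by
  subst hcard
  have : Nonempty α := Fintype.card_pos_iff.mp (by omega)
  have hfin : D.Finite := (sphere α j).finite_toSet.subset fun g hg => mem_sphere.2 (hD hg)
  set t := j / 3
  have hcount : #hfin.toFinset ≤ #(sphere α (j - t)) + (#(sphere α t)).choose 2 :=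
    (hfin.coe_toFinset.symm ▸ hDDC).card_le_card_add_choose_two
      (fun g => mk (g.toWord.take t)) (fun g => mk (g.toWord.drop t))
      (fun g _ => mk_take_mul_mk_drop g t)
      (fun g hg => mk_take_mem_sphere <|
        (hD (hfin.mem_toFinset.1 hg)).symm ▸ Nat.div_le_self j 3)
      (fun g hg => hD (hfin.mem_toFinset.1 hg) ▸ mk_drop_mem_sphere g t)
  have hsuffix : ((j - t : ℕ) : ℝ) ≤ 2 * j / 3 + 1 := by
    have : (j : ℝ) ≤ 3 * t + 3 := by exact_mod_cast (by omega : j ≤ 3 * t + 3)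
    rw [Nat.cast_sub (Nat.div_le_self j 3)]
    linarith
  have hprefix : 2 * (t : ℝ) ≤ 2 * j / 3 - 2 + 2 := by
    have : (3 * t : ℝ) ≤ j := by exact_mod_cast Nat.mul_div_le j 3
    linarith
  rw [Set.ncard_eq_toFinset_card D hfin]
  calc (#hfin.toFinset : ℝ) ≤ #(sphere α (j - t)) + ((#(sphere α t)).choose 2 : ℕ) := by
        exact_mod_cast hcount
    _ ≤ _ := add_le_add (card_sphere_le_rpow (by omega) hsuffix)
        (choose_two_card_sphere_le_rpow hprefix)
end

section
/- Let G be a group generated by a finite set {g_1,…,g_n}, let F_n be the free group on {x_1,…,x_n}, and let φ: F_n → G be the homomorphism with φ(x_i) = g_i. If D is a distinct difference configuration in G of diameter at most d (with respect to the generating set), then there exists a distinct difference configuration D̂ in F_n with |D̂| = |D| and diameter at most 2d. Hence |D| ≤ m(n, 2d), the maximum size of a DDC of diameter at most 2d in F_n. -/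
/-- Word length with respect to a generating set `X`. -/
noncomputable def wlen {G : Type*} [Group G] (X : Set G) (g : G) : ℕ :=
  sInf {ℓ : ℕ | ∃ w : List G, w.length = ℓ ∧ (∀ x ∈ w, x ∈ X ∪ X⁻¹) ∧ w.prod = g}

/-- `maxDDC n d` is the maximum cardinality of a DDC of diameter at most `d`
in the free group of rank `n`. -/
noncomputable def maxDDC (n d : ℕ) : ℕ :=
  sSup {k : ℕ | ∃ D : Set (FreeGroup (Fin n)), IsDDC D ∧
    (∀ g ∈ D, ∀ h ∈ D, (g⁻¹ * h).norm ≤ d) ∧ D.ncard = k}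

/-!
Lift a distinct difference configuration `D ⊆ G` along `FreeGroup.lift g`. Fix `c ∈ D` and, for
every `x : G`, a preimage `σ x` whose reduced length is at most the word length of `x`. The lift
of `a ∈ D` is `σ c * σ (c⁻¹ * a)`; two lifts differ by `(σ (c⁻¹ * a))⁻¹ * σ (c⁻¹ * b)`, of norm
at most `2 d`. The lifts form a DDC because `FreeGroup.lift g` is injective on them and carries
their differences to the differences in `D`.
-/

open FreeGroup

lemma IsDDC.of_image {H G : Type*} [Group H] [Group G] (f : H →* G) {S : Set H}
    (hf : Set.InjOn f S) (hS : IsDDC (f '' S)) : IsDDC S := by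
  intro a ha b hb a' ha' b' hb' hab hab' heq
  have hmap : (f a)⁻¹ * f b = (f a')⁻¹ * f b' := by simpa using congrArg f heq
  obtain ⟨h₁, h₂⟩ := hS _ (Set.mem_image_of_mem f ha) _ (Set.mem_image_of_mem f hb)
    _ (Set.mem_image_of_mem f ha') _ (Set.mem_image_of_mem f hb')
    (hf.ne_iff ha hb |>.mpr hab) (hf.ne_iff ha' hb' |>.mpr hab') hmap
  exact ⟨hf ha ha' h₁, hf hb hb' h₂⟩

lemma exists_list_length_eq_wlen {G : Type*} [Group G] {X : Set G}
    (hX : Subgroup.closure X = ⊤) (x : G) :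
    ∃ w : List G, w.length = wlen X x ∧ (∀ y ∈ w, y ∈ X ∪ X⁻¹) ∧ w.prod = x := by
  have hx : x ∈ Submonoid.closure (X ∪ X⁻¹) := by
    rw [← Subgroup.closure_toSubmonoid, hX]
    exact Subgroup.mem_top x
  obtain ⟨w, hw, hprod⟩ := Submonoid.exists_list_of_mem_closure hx
  have hne : {ℓ : ℕ | ∃ w : List G, w.length = ℓ ∧ (∀ y ∈ w, y ∈ X ∪ X⁻¹) ∧ w.prod = x}.Nonempty :=
    ⟨w.length, w, rfl, hw, hprod⟩
  exact Nat.sInf_mem hne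

namespace FreeGroup

variable {α : Type*} [DecidableEq α]

lemma exists_norm_le_length_and_lift_eq_prod {G : Type*} [Group G] (g : α → G) (w : List G)
    (hw : ∀ y ∈ w, y ∈ Set.range g ∪ (Set.range g)⁻¹) :
    ∃ u : FreeGroup α, u.norm ≤ w.length ∧ lift g u = w.prod := by
  induction w with
  | nil => exact ⟨1, by simp⟩
  | cons y w ih =>
    obtain ⟨u, hu, hlift⟩ := ih fun z hz => hw z (List.mem_cons_of_mem y hz)
    obtain ⟨v, hv, hy⟩ : ∃ v : FreeGroup α, v.norm ≤ 1 ∧ lift g v = y := by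
      rcases hw y List.mem_cons_self with ⟨i, rfl⟩ | ⟨i, hi⟩
      · exact ⟨of i, by simp, by simp⟩
      · exact ⟨(of i)⁻¹, by simp, by simp [hi]⟩
    refine ⟨v * u, ?_, by simp [hy, hlift]⟩
    calc (v * u).norm ≤ v.norm + u.norm := norm_mul_le v u
      _ ≤ (y :: w).length := by simp only [List.length_cons]; omega

lemma exists_norm_le_wlen {G : Type*} [Group G] {g : α → G}
    (hgen : Subgroup.closure (Set.range g) = ⊤) (x : G) :
    ∃ u : FreeGroup α, u.norm ≤ wlen (Set.range g) x ∧ lift g u = x := by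
  obtain ⟨w, hlen, hw, rfl⟩ := exists_list_length_eq_wlen hgen x
  exact hlen ▸ exists_norm_le_length_and_lift_eq_prod g w hw

lemma finite_setOf_norm_le [Finite α] (m : ℕ) : {x : FreeGroup α | x.norm ≤ m}.Finite :=
  ((List.finite_length_le _ m).preimage toWord_injective.injOn).subset fun _ hx => hx

lemma ncard_le_ncard_setOf_norm_le [Finite α] {S : Set (FreeGroup α)} {m : ℕ}
    (hS : ∀ a ∈ S, ∀ b ∈ S, (a⁻¹ * b).norm ≤ m) :
    S.ncard ≤ {x : FreeGroup α | x.norm ≤ m}.ncard := by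
  rcases S.eq_empty_or_nonempty with rfl | ⟨a, ha⟩
  · simp
  rw [← Set.ncard_image_of_injective S (mul_right_injective a⁻¹)]
  refine Set.ncard_le_ncard ?_ (finite_setOf_norm_le m)
  rintro _ ⟨b, hb, rfl⟩
  exact hS a ha b hb

end FreeGroup

lemma le_maxDDC {n d : ℕ} {S : Set (FreeGroup (Fin n))} (hS : IsDDC S)
    (hdiam : ∀ a ∈ S, ∀ b ∈ S, (a⁻¹ * b).norm ≤ d) : S.ncard ≤ maxDDC n d := by
  refine le_csSup ⟨{x : FreeGroup (Fin n) | x.norm ≤ d}.ncard, ?_⟩ ⟨S, hS, hdiam, rfl⟩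
  rintro _ ⟨T, -, hT, rfl⟩
  exact ncard_le_ncard_setOf_norm_le hT

theorem stmt16 {G : Type*} [Group G] (n : ℕ) (g : Fin n → G)
    (hgen : Subgroup.closure (Set.range g) = ⊤) (d : ℕ)
    (D : Set G) (hDDC : IsDDC D)
    (hdiam : ∀ a ∈ D, ∀ b ∈ D, wlen (Set.range g) (a⁻¹ * b) ≤ d) :
    (∃ Dhat : Set (FreeGroup (Fin n)), IsDDC Dhat ∧
        (∀ a ∈ Dhat, ∀ b ∈ Dhat, (a⁻¹ * b).norm ≤ 2 * d) ∧
        (FreeGroup.lift g) '' Dhat = D ∧ Dhat.ncard = D.ncard) ∧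
      D.ncard ≤ maxDDC n (2 * d) := by
  obtain ⟨c, hc⟩ : ∃ c : G, ∀ a ∈ D, wlen (Set.range g) (c⁻¹ * a) ≤ d :=
    D.eq_empty_or_nonempty.elim (fun h => ⟨1, by simp [h]⟩) fun ⟨c, hc⟩ => ⟨c, hdiam c hc⟩
  choose σ hσ_norm hσ_lift using exists_norm_le_wlen (α := Fin n) hgen
  set s : G → FreeGroup (Fin n) := fun a => σ c * σ (c⁻¹ * a)
  have hs : Set.LeftInvOn (lift g) s D := fun a _ => by simp [s, hσ_lift]
  have hDhat_diam : ∀ x ∈ s '' D, ∀ y ∈ s '' D, (x⁻¹ * y).norm ≤ 2 * d := by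
    rintro _ ⟨a, ha, rfl⟩ _ ⟨b, hb, rfl⟩
    calc ((s a)⁻¹ * s b).norm = ((σ (c⁻¹ * a))⁻¹ * σ (c⁻¹ * b)).norm := by simp [s, mul_assoc]
      _ ≤ (σ (c⁻¹ * a)).norm + (σ (c⁻¹ * b)).norm := by
        simpa only [norm_inv_eq] using FreeGroup.norm_mul_le (σ (c⁻¹ * a))⁻¹ (σ (c⁻¹ * b))
      _ ≤ 2 * d := by linarith [(hσ_norm _).trans (hc a ha), (hσ_norm _).trans (hc b hb)]
  have hDhat_DDC : IsDDC (s '' D) :=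
    .of_image (lift g) hs.rightInvOn_image.injOn (by rwa [hs.image_image])
  have hcard : (s '' D).ncard = D.ncard := hs.injOn.ncard_image
  exact ⟨⟨s '' D, hDhat_DDC, hDhat_diam, hs.image_image, hcard⟩,
    hcard ▸ le_maxDDC hDhat_DDC hDhat_diam⟩
end
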